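/- Let 𝔤 be a finite-dimensional real 2-step nilpotent Lie algebra, let Δ, Δ' ⊆ 𝔤 be subspaces with 𝔤 = Δ ⊕ [𝔤,𝔤] and 𝔤 = Δ' ⊕ [𝔤,𝔤], equipped with inner products ρ and ρ' respectively, and let π : 𝔤 → 𝔤/[𝔤,𝔤] be the quotient map. Assume the abelianization norms coincide, i.e. for all x ∈ Δ and x' ∈ Δ' with π(x) = π(x') one has ρ(x,x) = ρ'(x',x'). Then there exists a Lie algebra automorphism f of 𝔤 such that: (i) π∘f = π, i.e. f(x) − x ∈ [𝔤,𝔤] for all x, and hence there is a linear map L : 𝔤/[𝔤,𝔤] → [𝔤,𝔤] with f(x) = x + L(π(x)) for all x; (ii) f(Δ) = Δ' and ρ'(f(x),f(y)) = ρ(x,y) for all x, y ∈ Δ; (iii) f is an isometry from (𝔤,d) to (𝔤,d'), i.e. d'(f(p),f(q)) = d(p,q) for all p, q ∈ 𝔤, where d and d' are the sub-Riemannian distances associated with (Δ,ρ) and (Δ',ρ'). -/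

import Mathlib

open MeasureTheory

/-- The endpoint of the horizontal curve with control `u` in the 2-step model group `(𝔤,∗)`:
`E(u) = ∫₀¹ u + (1/2)∫₀¹ ⁅∫₀ᵗ u, u(t)⁆ dt`. -/
noncomputable def endpointMap {L : Type*} [NormedAddCommGroup L] [NormedSpace ℝ L]
    (bracket : L →ₗ[ℝ] L →ₗ[ℝ] L) (u : ℝ → L) : L :=
  (∫ t in (0:ℝ)..1, u t) +
    (2⁻¹ : ℝ) • ∫ t in (0:ℝ)..1, bracket (∫ s in (0:ℝ)..t, u s) (u t)

/-- `Δ` is bracket-generating: every subspace containing `Δ` and closed under the bracket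
(i.e. every Lie subalgebra containing `Δ`) is all of `𝔤`; equivalently, the smallest Lie
subalgebra containing `Δ` equals `𝔤`. -/
def BracketGenerating {L : Type*} [NormedAddCommGroup L] [NormedSpace ℝ L]
    (bracket : L →ₗ[ℝ] L →ₗ[ℝ] L) (Δ : Submodule ℝ L) : Prop :=
  ∀ W : Submodule ℝ L, Δ ≤ W → (∀ x ∈ W, ∀ y ∈ W, bracket x y ∈ W) → W = ⊤

/-- The derived subalgebra `[𝔤,𝔤]`, spanned by all brackets. -/
def derivedSub {L : Type*} [NormedAddCommGroup L] [NormedSpace ℝ L]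
    (bracket : L →ₗ[ℝ] L →ₗ[ℝ] L) : Submodule ℝ L :=
  Submodule.span ℝ {z : L | ∃ x y : L, z = bracket x y}

/-- The group product `x∗y = x + y + (1/2)⁅x,y⁆` of the model group. -/
noncomputable def gmul {L : Type*} [NormedAddCommGroup L] [NormedSpace ℝ L]
    (bracket : L →ₗ[ℝ] L →ₗ[ℝ] L) (x y : L) : L :=
  x + y + (2⁻¹ : ℝ) • bracket x y

/-- `N(q)`: the infimal energy `∫₀¹ ρ(u,u)` over `L²` controls `u` valued in `S`
with endpoint `q`. -/
noncomputable def energyN {L : Type*} [NormedAddCommGroup L] [NormedSpace ℝ L]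
    (bracket : L →ₗ[ℝ] L →ₗ[ℝ] L) (S : Set L) (ρ : L →ₗ[ℝ] L →ₗ[ℝ] ℝ) (q : L) : ℝ :=
  sInf {e : ℝ | ∃ u : ℝ → L,
    MemLp u 2 (volume.restrict (Set.Icc (0:ℝ) 1)) ∧
    (∀ᵐ t ∂(volume.restrict (Set.Icc (0:ℝ) 1)), u t ∈ S) ∧
    endpointMap bracket u = q ∧ e = ∫ t in (0:ℝ)..1, ρ (u t) (u t)}

/-- The sub-Riemannian distance `d(p,q) = √(N((−p)∗q))` of controls valued in `S`. -/
noncomputable def sdist {L : Type*} [NormedAddCommGroup L] [NormedSpace ℝ L]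
    (bracket : L →ₗ[ℝ] L →ₗ[ℝ] L) (S : Set L) (ρ : L →ₗ[ℝ] L →ₗ[ℝ] ℝ) (p q : L) : ℝ :=
  Real.sqrt (energyN bracket S ρ (gmul bracket (-p) q))

/-- `V = {v ∈ Δ : ρ(v,w) = 0 for all w ∈ Δ ∩ [𝔤,𝔤]}`, the horizontal space of the
canonical asymptotic metric. -/
def Vset {L : Type*} [NormedAddCommGroup L] [NormedSpace ℝ L]
    (bracket : L →ₗ[ℝ] L →ₗ[ℝ] L) (Δ : Submodule ℝ L) (ρ : L →ₗ[ℝ] L →ₗ[ℝ] ℝ) : Set L :=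
  {v : L | v ∈ Δ ∧ ∀ w ∈ Δ ⊓ derivedSub bracket, ρ v w = 0}

/-!
Both `Δ` and `Δ'` are complements of `D = [𝔤,𝔤]`, so with `P`, `P'` the projections onto them
along `D`, the map `T = P' ∘ P - P` takes values in `D`, vanishes on `D`, and `x + T x = P' x`
for `x ∈ Δ`. Hence `T² = 0` and `f = id + T` is an automorphism carrying `Δ` onto `Δ'`.
In a 2-step nilpotent algebra the bracket only sees classes modulo `D`, so `f` is a Lie
automorphism; it therefore commutes with the group law and the endpoint map. By the hypothesis
on abelianization norms and polarization, `f` is an isometry `(Δ, ρ) → (Δ', ρ')`, so it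
transports horizontal controls bijectively and energy-preservingly, and thus preserves `d`.
-/

section LinearAlgebra

variable {R M : Type*} [Ring R] [AddCommGroup M] [Module R M]

def LinearEquiv.idAddOfSqZero (T : M →ₗ[R] M) (hT : ∀ x, T (T x) = 0) : M ≃ₗ[R] M :=
  .ofLinearMap (LinearMap.id + T) (LinearMap.id - T) (by ext; simp [hT]) (by ext; simp [hT])

@[simp]
theorem LinearEquiv.idAddOfSqZero_apply (T : M →ₗ[R] M) (hT : ∀ x, T (T x) = 0) (x : M) :
    LinearEquiv.idAddOfSqZero T hT x = x + T x :=
  rfl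

theorem Submodule.exists_linearMap_add_mem_of_isCompl {D Δ Δ' : Submodule R M}
    (h : IsCompl Δ D) (h' : IsCompl Δ' D) :
    ∃ T : M →ₗ[R] M, (∀ x, T x ∈ D) ∧ (∀ x ∈ D, T x = 0) ∧ ∀ x ∈ Δ, x + T x ∈ Δ' := by
  refine ⟨Δ'.projection D h' ∘ₗ Δ.projection D h - Δ.projection D h, fun x => ?_,
    fun x hx => ?_, fun x hx => ?_⟩
  · simpa using D.neg_mem (Δ'.sub_projection_mem h' (Δ.projection D h x))
  · simp [projection_apply_of_mem_right h hx]
  · simp [projection_apply_of_mem_left h hx]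

theorem Submodule.map_eq_of_sub_mem {D Δ Δ' : Submodule R M} {f : M →ₗ[R] M}
    (hf : ∀ x, f x - x ∈ D) (hfΔ : ∀ x ∈ Δ, f x ∈ Δ') (h : Codisjoint Δ D)
    (h' : Disjoint Δ' D) : Δ.map f = Δ' := by
  refine le_antisymm (Submodule.map_le_iff_le_comap.2 hfΔ) fun y hy => ?_
  obtain ⟨a, ha, d, hd, rfl⟩ := Submodule.mem_sup.1 (h.eq_top ▸ Submodule.mem_top : y ∈ Δ ⊔ D)
  have hdiff : a + d - f a = 0 := by
    refine (Submodule.disjoint_def.1 h') _ (Δ'.sub_mem hy (hfΔ a ha)) ?_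
    rw [show a + d - f a = d - (f a - a) by abel]
    exact D.sub_mem hd (hf a)
  exact ⟨a, ha, (sub_eq_zero.1 hdiff).symm⟩

end LinearAlgebra

namespace LinearMap.BilinForm

theorem apply_eq_of_apply_self_eq {K M N : Type*} [Field K] [NeZero (2 : K)]
    [AddCommGroup M] [Module K M] [AddCommGroup N] [Module K N] {Δ : Submodule K M}
    {Δ' : Submodule K N} {g : M →ₗ[K] N} (hg : ∀ x ∈ Δ, g x ∈ Δ')
    {ρ : LinearMap.BilinForm K M} {ρ' : LinearMap.BilinForm K N}
    (hsym : ∀ x ∈ Δ, ∀ y ∈ Δ, ρ x y = ρ y x) (hsym' : ∀ x ∈ Δ', ∀ y ∈ Δ', ρ' x y = ρ' y x)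
    (hdiag : ∀ x ∈ Δ, ρ' (g x) (g x) = ρ x x) :
    ∀ x ∈ Δ, ∀ y ∈ Δ, ρ' (g x) (g y) = ρ x y := by
  have := ext_of_isSymm (B := restrict (ρ'.compl₁₂ g g) Δ) (C := restrict ρ Δ)
    ⟨fun x y => hsym' _ (hg x x.2) _ (hg y y.2)⟩ ⟨fun x y => hsym x x.2 y y.2⟩
    (fun x => hdiag x x.2)
  exact fun x hx y hy => congr($this ⟨x, hx⟩ ⟨y, hy⟩)

end LinearMap.BilinForm

theorem ContinuousLinearEquiv.intervalIntegral_comp_comm {𝕜 E F : Type*} [RCLike 𝕜]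
    [NormedAddCommGroup E] [NormedSpace 𝕜 E] [NormedSpace ℝ E]
    [NormedAddCommGroup F] [NormedSpace 𝕜 F] [NormedSpace ℝ F] {μ : Measure ℝ}
    (L : E ≃L[𝕜] F) (f : ℝ → E) (a b : ℝ) :
    ∫ x in a..b, L (f x) ∂μ = L (∫ x in a..b, f x ∂μ) := by
  simp_rw [intervalIntegral, L.integral_comp_comm, L.map_sub]

section TwoStep

variable {L : Type*} [NormedAddCommGroup L] [NormedSpace ℝ L] (bracket : L →ₗ[ℝ] L →ₗ[ℝ] L)

theorem bracket_eq_zero_of_mem_derivedSub (h2step : ∀ x y z : L, bracket (bracket x y) z = 0)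
    {w : L} (hw : w ∈ derivedSub bracket) (z : L) : bracket w z = 0 := by
  induction hw using Submodule.span_induction with
  | mem x h => obtain ⟨a, b, rfl⟩ := h; exact h2step a b z
  | zero => simp
  | add x y _ _ hx hy => simp [hx, hy]
  | smul a x _ hx => simp [hx]

theorem bracket_add_add_of_mem_derivedSub (halt : bracket.IsAlt)
    (h2step : ∀ x y z : L, bracket (bracket x y) z = 0) (x y : L) {d e : L}
    (hd : d ∈ derivedSub bracket) (he : e ∈ derivedSub bracket) :
    bracket (x + d) (y + e) = bracket x y := by
  have hzero : ∀ {w}, w ∈ derivedSub bracket → ∀ z, bracket w z = 0 :=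
    bracket_eq_zero_of_mem_derivedSub bracket h2step
  simp [hzero hd, halt.isRefl _ _ (hzero he x)]

theorem map_bracket_of_sub_mem_derivedSub (halt : bracket.IsAlt)
    (h2step : ∀ x y z : L, bracket (bracket x y) z = 0) {f : L → L}
    (hf : ∀ x, f x - x ∈ derivedSub bracket) (hfD : ∀ x ∈ derivedSub bracket, f x = x)
    (x y : L) : f (bracket x y) = bracket (f x) (f y) := by
  rw [hfD _ (Submodule.subset_span ⟨x, y, rfl⟩), ← add_sub_cancel x (f x), ← add_sub_cancel y (f y),
    bracket_add_add_of_mem_derivedSub bracket halt h2step _ _ (hf x) (hf y)]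

end TwoStep

section Isometry

variable {L : Type*} [NormedAddCommGroup L] [NormedSpace ℝ L] (bracket : L →ₗ[ℝ] L →ₗ[ℝ] L)

theorem map_gmul {F : Type*} [FunLike F L L] [LinearMapClass F ℝ L L] {g : F}
    (hg : ∀ x y, g (bracket x y) = bracket (g x) (g y)) (x y : L) :
    g (gmul bracket x y) = gmul bracket (g x) (g y) := by
  simp [gmul, hg]

theorem endpointMap_comp {g : L ≃L[ℝ] L} (hg : ∀ x y, g (bracket x y) = bracket (g x) (g y))
    (u : ℝ → L) : endpointMap bracket (fun t => g (u t)) = g (endpointMap bracket u) := by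
  simp only [endpointMap, g.intervalIntegral_comp_comm, ← hg, map_add, map_smul]

def energySet (S : Set L) (ρ : L →ₗ[ℝ] L →ₗ[ℝ] ℝ) (q : L) : Set ℝ :=
  {e : ℝ | ∃ u : ℝ → L,
    MemLp u 2 (volume.restrict (Set.Icc (0:ℝ) 1)) ∧
    (∀ᵐ t ∂(volume.restrict (Set.Icc (0:ℝ) 1)), u t ∈ S) ∧
    endpointMap bracket u = q ∧ e = ∫ t in (0:ℝ)..1, ρ (u t) (u t)}

theorem energyN_eq_sInf_energySet (S : Set L) (ρ : L →ₗ[ℝ] L →ₗ[ℝ] ℝ) (q : L) :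
    energyN bracket S ρ q = sInf (energySet bracket S ρ q) :=
  rfl

variable {S S' : Set L} {ρ ρ' : L →ₗ[ℝ] L →ₗ[ℝ] ℝ} {g : L ≃L[ℝ] L}

theorem energySet_subset_map (hg : ∀ x y, g (bracket x y) = bracket (g x) (g y))
    (hS : ∀ x ∈ S, g x ∈ S') (hρ : ∀ x ∈ S, ρ' (g x) (g x) = ρ x x) (q : L) :
    energySet bracket S ρ q ⊆ energySet bracket S' ρ' (g q) := by
  rintro e ⟨u, hu, huS, rfl, rfl⟩
  refine ⟨fun t => g (u t), (g : L →L[ℝ] L).comp_memLp' hu, huS.mono fun t ht => hS _ ht,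
    endpointMap_comp bracket hg u, intervalIntegral.integral_congr_ae ?_⟩
  have huS' := (ae_restrict_iff' measurableSet_Icc).1 huS
  filter_upwards [huS'] with t ht htI
  rw [Set.uIoc_of_le zero_le_one] at htI
  exact (hρ _ (ht (Set.Ioc_subset_Icc_self htI))).symm

theorem energyN_map (hg : ∀ x y, g (bracket x y) = bracket (g x) (g y))
    (hS : ∀ x, g x ∈ S' ↔ x ∈ S) (hρ : ∀ x ∈ S, ρ' (g x) (g x) = ρ x x) (q : L) :
    energyN bracket S' ρ' (g q) = energyN bracket S ρ q := by
  have hg' : ∀ x y, g.symm (bracket x y) = bracket (g.symm x) (g.symm y) := fun x y =>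
    g.injective (by simp [hg])
  have hS' : ∀ x ∈ S', g.symm x ∈ S := fun x hx => (hS _).1 (by simpa using hx)
  have hρ' : ∀ x ∈ S', ρ (g.symm x) (g.symm x) = ρ' x x := fun x hx => by
    simpa using (hρ _ (hS' x hx)).symm
  simp only [energyN_eq_sInf_energySet]
  refine congrArg sInf (subset_antisymm ?_
    (energySet_subset_map bracket hg (fun x => (hS x).2) hρ q))
  simpa using energySet_subset_map bracket hg' hS' hρ' (g q)

theorem sdist_map (hg : ∀ x y, g (bracket x y) = bracket (g x) (g y))
    (hS : ∀ x, g x ∈ S' ↔ x ∈ S) (hρ : ∀ x ∈ S, ρ' (g x) (g x) = ρ x x) (p q : L) :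
    sdist bracket S' ρ' (g p) (g q) = sdist bracket S ρ p q := by
  rw [sdist, sdist, ← map_neg, ← map_gmul bracket hg, energyN_map bracket hg hS hρ]

end Isometry

theorem stmt_11 {L : Type*} [NormedAddCommGroup L] [NormedSpace ℝ L] [FiniteDimensional ℝ L]
    (bracket : L →ₗ[ℝ] L →ₗ[ℝ] L)
    (halt : ∀ x : L, bracket x x = 0)
    (h2step : ∀ x y z : L, bracket (bracket x y) z = 0)
    (Δ Δ' : Submodule ℝ L)
    (hcompl : IsCompl Δ (derivedSub bracket))
    (hcompl' : IsCompl Δ' (derivedSub bracket))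
    (ρ ρ' : L →ₗ[ℝ] L →ₗ[ℝ] ℝ)
    (hsym : ∀ x ∈ Δ, ∀ y ∈ Δ, ρ x y = ρ y x)
    (hsym' : ∀ x ∈ Δ', ∀ y ∈ Δ', ρ' x y = ρ' y x)
    -- the abelianization norms coincide: if `x ∈ Δ` and `x' ∈ Δ'` have the same image in
    -- `𝔤/[𝔤,𝔤]` (i.e. `x - x' ∈ [𝔤,𝔤]`), then `ρ(x,x) = ρ'(x',x')`
    (hab : ∀ x ∈ Δ, ∀ x' ∈ Δ', x - x' ∈ derivedSub bracket → ρ x x = ρ' x' x') :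
    ∃ f : L ≃ₗ[ℝ] L,
      -- `f` is a Lie algebra automorphism
      (∀ x y : L, f (bracket x y) = bracket (f x) (f y)) ∧
      -- (i) `π ∘ f = π`
      (∀ x : L, f x - x ∈ derivedSub bracket) ∧
      -- ... hence `f(x) = x + T(x)` for a linear map `T` with values in `[𝔤,𝔤]` vanishing
      -- on `[𝔤,𝔤]` (i.e. induced by a linear map `𝔤/[𝔤,𝔤] → [𝔤,𝔤]`)
      (∃ T : L →ₗ[ℝ] L, (∀ x : L, T x ∈ derivedSub bracket) ∧
        (∀ x ∈ derivedSub bracket, T x = 0) ∧ (∀ x : L, f x = x + T x)) ∧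
      -- (ii) `f(Δ) = Δ'` and `f` is a linear isometry from `(Δ,ρ)` to `(Δ',ρ')`
      Δ.map (f : L →ₗ[ℝ] L) = Δ' ∧
      (∀ x ∈ Δ, ∀ y ∈ Δ, ρ' (f x) (f y) = ρ x y) ∧
      -- (iii) `f : (𝔤,d) → (𝔤,d')` is an isometry
      (∀ p q : L, sdist bracket (Δ' : Set L) ρ' (f p) (f q) =
        sdist bracket (Δ : Set L) ρ p q) := by
  obtain ⟨T, hTD, hT0, hTΔ⟩ := Submodule.exists_linearMap_add_mem_of_isCompl hcompl hcompl'
  let f := LinearEquiv.idAddOfSqZero T fun x => hT0 _ (hTD x)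
  have hf : ∀ x, f x - x ∈ derivedSub bracket := fun x => by simpa [f] using hTD x
  have hfD : ∀ x ∈ derivedSub bracket, f x = x := fun x hx => by simp [f, hT0 x hx]
  have hmap : Δ.map (f : L →ₗ[ℝ] L) = Δ' :=
    Submodule.map_eq_of_sub_mem hf hTΔ hcompl.codisjoint hcompl'.disjoint
  have hlie := map_bracket_of_sub_mem_derivedSub bracket halt h2step hf hfD
  have hdiag : ∀ x ∈ Δ, ρ' (f x) (f x) = ρ x x := fun x hx =>
    (hab x hx _ (hTΔ x hx) (by simpa [f] using (derivedSub bracket).neg_mem (hTD x))).symm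
  refine ⟨f, hlie, hf, ⟨T, hTD, hT0, fun _ => rfl⟩, hmap,
    LinearMap.BilinForm.apply_eq_of_apply_self_eq hTΔ hsym hsym' hdiag,
    sdist_map bracket (g := f.toContinuousLinearEquiv) hlie (fun x => ?_) hdiag⟩
  change f x ∈ Δ' ↔ x ∈ Δ
  rw [← hmap, Submodule.mem_map_equiv, LinearEquiv.symm_apply_apply]
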